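/- arXiv:0906.0651 — 6 statements merged into one kernel-verified Lean document; each statement's English description precedes it below -/
import Mathlib

section
/- Let f, n, m be natural numbers with n > 3f and m ≥ n − f. Let P be a multiset of real numbers with card P = n and let U be a sub-multiset of P with card U = m. Then the (f+1)-th smallest element of P lies in the range of U: min U ≤ P_(f+1) ≤ max U. -/
/-- The k-th smallest element (1-indexed, counted with multiplicity) of a
multiset of real numbers. -/
noncomputable def nth (S : Multiset ℝ) (k : ℕ) : ℝ :=
  (S.sort (· ≤ ·)).getD (k - 1) 0

/-- The smallest element of a (nonempty) multiset of reals. -/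
noncomputable def mmin (S : Multiset ℝ) : ℝ := nth S 1

/-- The largest element of a (nonempty) multiset of reals. -/
noncomputable def mmax (S : Multiset ℝ) : ℝ := nth S S.card

/-- The diameter of a (nonempty) multiset of reals. -/
noncomputable def mdiam (S : Multiset ℝ) : ℝ := mmax S - mmin S

/-!
Let `t = P_(f+1)`. At least `f + 1` elements of `P` are `≤ t` and at least `n - f` are `≥ t`,
while at most `n - m ≤ f` elements of `P` lie outside `U`. Since both counts exceed `f`,
`U` contains an element `≤ t` and an element `≥ t`.
-/

namespace List.SortedLE

variable {α : Type*} [LinearOrder α] {l : List α}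

theorem succ_le_countP_le_getElem (hl : l.SortedLE) {k : ℕ} (hk : k < l.length) :
    k + 1 ≤ l.countP (· ≤ l[k]) := by
  have hprefix : (l.take (k + 1)).countP (· ≤ l[k]) = k + 1 := by
    rw [countP_eq_length.mpr, length_take_of_le hk]
    intro a ha
    obtain ⟨i, hi, rfl⟩ := mem_take_iff_getElem.mp ha
    simpa using hl.getElem_le_getElem_of_le (by omega : i ≤ k)
  exact hprefix ▸ (l.take_sublist _).countP_le

theorem length_sub_le_countP_getElem_le (hl : l.SortedLE) {k : ℕ} (hk : k < l.length) :
    l.length - k ≤ l.countP (l[k] ≤ ·) := by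
  have hsuffix : (l.drop k).countP (l[k] ≤ ·) = l.length - k := by
    rw [countP_eq_length.mpr, length_drop]
    intro a ha
    obtain ⟨i, hi, rfl⟩ := mem_iff_getElem.mp ha
    simpa using hl.getElem_le_getElem_of_le (by omega : k ≤ k + i)
  exact hsuffix ▸ (l.drop_sublist _).countP_le

end List.SortedLE

namespace Multiset

theorem exists_mem_of_card_sub_lt_countP {α : Type*} [DecidableEq α] {s t : Multiset α}
    (hst : s ≤ t) (p : α → Prop) [DecidablePred p] (hlt : card t - card s < countP p t) :
    ∃ a ∈ s, p a := by
  have hsplit : countP p t = countP p (t - s) + countP p s := by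
    rw [← countP_add, tsub_add_cancel_of_le hst]
  have hdiff := countP_le_card p (t - s)
  rw [card_sub hst] at hdiff
  exact countP_pos.mp (by omega)

theorem sortedLE_sort {α : Type*} [LinearOrder α] (s : Multiset α) :
    (s.sort (· ≤ ·)).SortedLE :=
  List.sortedLE_iff_pairwise.mpr (pairwise_sort _ _)

end Multiset

section nth

variable {S : Multiset ℝ}

theorem nth_succ_eq_getElem {k : ℕ} (hk : k < S.card) :
    nth S (k + 1) = (S.sort (· ≤ ·))[k]'(by rwa [Multiset.length_sort]) :=
  List.getD_eq_getElem _ _ _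

theorem nth_succ_le_nth_succ {i j : ℕ} (hij : i ≤ j) (hj : j < S.card) :
    nth S (i + 1) ≤ nth S (j + 1) := by
  rw [nth_succ_eq_getElem (hij.trans_lt hj), nth_succ_eq_getElem hj]
  exact (Multiset.sortedLE_sort S).getElem_le_getElem_of_le hij

theorem exists_nth_succ_eq_of_mem {u : ℝ} (hu : u ∈ S) : ∃ k < S.card, nth S (k + 1) = u := by
  obtain ⟨k, hk, rfl⟩ := List.mem_iff_getElem.mp ((Multiset.mem_sort (· ≤ ·)).mpr hu)
  rw [Multiset.length_sort] at hk
  exact ⟨k, hk, nth_succ_eq_getElem hk⟩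

theorem mmin_le_of_mem {u : ℝ} (hu : u ∈ S) : mmin S ≤ u := by
  obtain ⟨k, hk, rfl⟩ := exists_nth_succ_eq_of_mem hu
  exact nth_succ_le_nth_succ k.zero_le hk

theorem le_mmax_of_mem {u : ℝ} (hu : u ∈ S) : u ≤ mmax S := by
  obtain ⟨k, hk, rfl⟩ := exists_nth_succ_eq_of_mem hu
  have hcard : S.card = S.card - 1 + 1 := by omega
  rw [mmax, hcard]
  exact nth_succ_le_nth_succ (by omega) (by omega)

theorem succ_le_countP_le_nth_succ {k : ℕ} (hk : k < S.card) :
    k + 1 ≤ S.countP (· ≤ nth S (k + 1)) := by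
  have := (Multiset.sortedLE_sort S).succ_le_countP_le_getElem (k := k)
    (by rwa [Multiset.length_sort])
  rwa [← nth_succ_eq_getElem hk, ← Multiset.coe_countP, Multiset.sort_eq] at this

theorem card_sub_le_countP_nth_succ_le {k : ℕ} (hk : k < S.card) :
    S.card - k ≤ S.countP (nth S (k + 1) ≤ ·) := by
  have := (Multiset.sortedLE_sort S).length_sub_le_countP_getElem_le (k := k)
    (by rwa [Multiset.length_sort])
  rwa [← nth_succ_eq_getElem hk, ← Multiset.coe_countP, Multiset.sort_eq,
    Multiset.length_sort] at this

end nth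

theorem stmt0 (f n m : ℕ) (P U : Multiset ℝ)
    (hn : n > 3 * f) (hm : m ≥ n - f)
    (hP : Multiset.card P = n) (hU : U ≤ P) (hUm : Multiset.card U = m) :
    mmin U ≤ nth P (f + 1) ∧ nth P (f + 1) ≤ mmax U := by
  have hf : f < P.card := by omega
  have hbelow := succ_le_countP_le_nth_succ hf
  have habove := card_sub_le_countP_nth_succ_le hf
  constructor
  · obtain ⟨u, hu, hle⟩ :=
      Multiset.exists_mem_of_card_sub_lt_countP hU (· ≤ nth P (f + 1)) (by omega)
    exact (mmin_le_of_mem hu).trans hle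
  · obtain ⟨u, hu, hle⟩ :=
      Multiset.exists_mem_of_card_sub_lt_countP hU (nth P (f + 1) ≤ ·) (by omega)
    exact hle.trans (le_mmax_of_mem hu)
end

section
/- Let f, n, m be natural numbers with n > 3f and m ≥ n − f. Let P be a multiset of real numbers with card P = n and let U be a sub-multiset of P with card U = m. Then the (n−f)-th smallest element of P lies in the range of U: min U ≤ P_(n−f) ≤ max U. -/
/-! The sorted list of `U` is a sublist of the sorted list of `P`, and the `i`-th entry of a
sublist of length `m` of a sorted list of length `n` lies between its `i`-th and its
`(i + (n - m))`-th entries. Hence `min U = U_(1) ≤ P_(1 + n - m) ≤ P_(n - f)`, since `m > f`,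
and `max U = U_(m) ≥ P_(m) ≥ P_(n - f)`, since `m ≥ n - f`. -/

namespace List

variable {α : Type*} {R : α → α → Prop} [Std.Refl R] {l₁ l₂ : List α}

theorem Sublist.rel_getElem_of_pairwise (h : l₁ <+ l₂) (hl₂ : l₂.Pairwise R) {i : ℕ}
    (hi : i < l₁.length) : R (l₂[i]'(hi.trans_le h.length_le)) l₁[i] := by
  obtain ⟨f, hf⟩ := sublist_iff_exists_orderEmbedding_getElem?_eq.mp h
  obtain ⟨hfi, hl₁i⟩ := getElem?_eq_some_iff.mp ((getElem?_eq_getElem hi).symm.trans (hf i)).symm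
  rw [← hl₁i]
  rcases f.strictMono.le_apply.eq_or_lt (a := i) with heq | hlt
  · simp only [← heq]
    exact refl_of R _
  · exact pairwise_iff_getElem.mp hl₂ _ _ _ _ hlt

theorem Sublist.rel_getElem_add_of_pairwise (h : l₁ <+ l₂) (hl₂ : l₂.Pairwise R) {i : ℕ}
    (hi : i < l₁.length) :
    R l₁[i] (l₂[i + (l₂.length - l₁.length)]'(by have := h.length_le; omega)) := by
  have : Std.Refl (flip R) := ⟨refl_of R⟩
  have hrev := h.reverse.rel_getElem_of_pairwise (R := flip R) (pairwise_reverse.mpr hl₂)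
    (i := l₁.length - 1 - i) (by simp only [length_reverse]; omega)
  simp only [getElem_reverse, flip] at hrev
  have := h.length_le
  convert hrev using 2 <;> omega

end List

theorem Multiset.sort_sublist_sort_of_le {α : Type*} (r : α → α → Prop) [DecidableRel r]
    [IsTrans α r] [Std.Antisymm r] [Std.Total r] {s t : Multiset α} (h : s ≤ t) :
    (s.sort r).Sublist (t.sort r) :=
  List.sublist_of_subperm_of_pairwise (by rwa [← Multiset.coe_le, sort_eq, sort_eq])
    (pairwise_sort _ _) (pairwise_sort _ _)

section nth

variable {S U P : Multiset ℝ} {i j : ℕ}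

theorem nth_eq_getElem_sort (h₀ : 0 < i) (h : i ≤ S.card) :
    nth S i = (S.sort (· ≤ ·))[i - 1]'(by rw [Multiset.length_sort]; omega) :=
  List.getD_eq_getElem _ _ _

theorem nth_le_nth (h₀ : 0 < i) (hij : i ≤ j) (hj : j ≤ S.card) : nth S i ≤ nth S j := by
  rw [nth_eq_getElem_sort h₀ (hij.trans hj), nth_eq_getElem_sort (h₀.trans_le hij) hj]
  exact (Multiset.pairwise_sort _ _).sortedLE.getElem_le_getElem_of_le (by omega)

theorem nth_le_nth_of_le (hUP : U ≤ P) (h₀ : 0 < i) (hi : i ≤ U.card) : nth P i ≤ nth U i := by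
  have hsub := Multiset.sort_sublist_sort_of_le (· ≤ ·) hUP
  rw [nth_eq_getElem_sort h₀ (hi.trans (Multiset.card_le_card hUP)), nth_eq_getElem_sort h₀ hi]
  exact hsub.rel_getElem_of_pairwise (Multiset.pairwise_sort _ _) _

theorem nth_le_nth_add_of_le (hUP : U ≤ P) (h₀ : 0 < i) (hi : i ≤ U.card) :
    nth U i ≤ nth P (i + (P.card - U.card)) := by
  have hsub := Multiset.sort_sublist_sort_of_le (· ≤ ·) hUP
  have hUP' := Multiset.card_le_card hUP
  rw [nth_eq_getElem_sort h₀ hi, nth_eq_getElem_sort (by omega) (by omega)]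
  convert hsub.rel_getElem_add_of_pairwise (Multiset.pairwise_sort _ _) _ using 2
  simp only [Multiset.length_sort]
  omega

end nth

theorem stmt1 (f n m : ℕ) (P U : Multiset ℝ)
    (hn : n > 3 * f) (hm : m ≥ n - f)
    (hP : Multiset.card P = n) (hU : U ≤ P) (hUm : Multiset.card U = m) :
    mmin U ≤ nth P (n - f) ∧ nth P (n - f) ≤ mmax U := by
  have hmn : m ≤ n := hP ▸ hUm ▸ Multiset.card_le_card hU
  constructor
  · calc mmin U = nth U 1 := rfl
      _ ≤ nth P (1 + (n - m)) := hP ▸ hUm ▸ nth_le_nth_add_of_le hU one_pos (by omega)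
      _ ≤ nth P (n - f) := nth_le_nth (by omega) (by omega) (by omega)
  · calc nth P (n - f) ≤ nth P m := nth_le_nth (by omega) hm (by omega)
      _ ≤ nth U m := nth_le_nth_of_le hU (by omega) hUm.ge
      _ = mmax U := by rw [mmax, hUm]
end

section
/- Let f, n, m be natural numbers with n > 3f and m ≥ n − f. Let P be a multiset of real numbers with card P = n and let U be a sub-multiset of P with card U = m. Then for every x ∈ U, the destination D(x, P) = (min(x, P_(f+1)) + max(x, P_(n−f)))/2 computed by a correct robot located at x satisfies min U ≤ D(x, P) ≤ max U. (Hence every destination computed by a correct robot lies in the range of positions held by correct robots: the algorithm is cautious.) -/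
lemma sorted_getElem_mono {l : List ℝ} (hs : l.Pairwise (· ≤ ·)) {i j : ℕ}
    (hij : i ≤ j) (hj : j < l.length) : l[i]'(lt_of_le_of_lt hij hj) ≤ l[j] := by
  rcases eq_or_lt_of_le hij with rfl | h
  · exact le_refl _
  · exact List.pairwise_iff_getElem.mp hs i j _ hj h

lemma mmin_le_of_mem_s3 {U : Multiset ℝ} {x : ℝ} (hx : x ∈ U) : mmin U ≤ x := by
  set l := U.sort (· ≤ ·) with hl
  have hs : l.Pairwise (· ≤ ·) := U.pairwise_sort _
  have hxl : x ∈ l := by rw [← Multiset.mem_sort (· ≤ ·)] at hx; exact hx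
  obtain ⟨i, hi, rfl⟩ := List.getElem_of_mem hxl
  have h0 : 0 < l.length := lt_of_le_of_lt (Nat.zero_le i) hi
  have : mmin U = l[0] := by
    unfold mmin nth
    exact l.getD_eq_getElem 0 h0
  rw [this]
  exact sorted_getElem_mono hs (Nat.zero_le i) hi

lemma le_mmax_of_mem_s3 {U : Multiset ℝ} {x : ℝ} (hx : x ∈ U) : x ≤ mmax U := by
  set l := U.sort (· ≤ ·) with hl
  have hs : l.Pairwise (· ≤ ·) := U.pairwise_sort _
  have hlen : l.length = U.card := U.length_sort _
  have hxl : x ∈ l := by rw [← Multiset.mem_sort (· ≤ ·)] at hx; exact hx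
  obtain ⟨i, hi, rfl⟩ := List.getElem_of_mem hxl
  have hlast : U.card - 1 < l.length := by omega
  have : mmax U = l[U.card - 1] := by
    unfold mmax nth
    exact l.getD_eq_getElem 0 hlast
  rw [this]
  exact sorted_getElem_mono hs (by omega) hlast

lemma le_nth (S : Multiset ℝ) (k : ℕ) (a : ℝ) (hk1 : 1 ≤ k) (hk : k ≤ S.card)
    (h : Multiset.card (S.filter (· < a)) < k) : a ≤ nth S k := by
  set l := S.sort (· ≤ ·) with hl
  have hs : l.Pairwise (· ≤ ·) := S.pairwise_sort _
  have hlen : l.length = S.card := S.length_sort _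
  by_contra hlt
  push_neg at hlt
  unfold nth at hlt
  have hidx : k - 1 < l.length := by omega
  rw [l.getD_eq_getElem 0 hidx] at hlt
  have hall : ∀ x ∈ l.take k, x < a := by
    intro x hx
    obtain ⟨i, hi, rfl⟩ := List.getElem_of_mem hx
    rw [List.getElem_take]
    have hik : i < k := by
      have := hi; rw [List.length_take] at this; omega
    calc l[i]'(by omega) ≤ l[k-1] := sorted_getElem_mono hs (by omega) hidx
      _ < a := hlt
  have hfself : (↑(l.take k) : Multiset ℝ).filter (· < a) = ↑(l.take k) :=
    Multiset.filter_eq_self.mpr hall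
  have hle : (↑(l.take k) : Multiset ℝ) ≤ S := by
    have : (↑l : Multiset ℝ) = S := S.sort_eq _
    rw [← this]
    exact (l.take_sublist k).subperm
  have hcard : k ≤ Multiset.card (S.filter (· < a)) := by
    have h1 : (↑(l.take k) : Multiset ℝ).filter (· < a) ≤ S.filter (· < a) :=
      Multiset.filter_le_filter _ hle
    have h2 := Multiset.card_le_card h1
    rw [hfself] at h2
    simp only [Multiset.coe_card, List.length_take] at h2
    omega
  omega

lemma nth_le (S : Multiset ℝ) (k : ℕ) (a : ℝ) (hk1 : 1 ≤ k) (hk : k ≤ S.card)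
    (h : Multiset.card (S.filter (a < ·)) ≤ S.card - k) : nth S k ≤ a := by
  set l := S.sort (· ≤ ·) with hl
  have hs : l.Pairwise (· ≤ ·) := S.pairwise_sort _
  have hlen : l.length = S.card := S.length_sort _
  by_contra hlt
  push_neg at hlt
  unfold nth at hlt
  have hidx : k - 1 < l.length := by omega
  rw [l.getD_eq_getElem 0 hidx] at hlt
  have hall : ∀ x ∈ l.drop (k-1), a < x := by
    intro x hx
    obtain ⟨i, hi, rfl⟩ := List.getElem_of_mem hx
    rw [List.getElem_drop]
    calc a < l[k-1] := hlt
      _ ≤ l[k-1+i]'(by rw [List.length_drop] at hi; omega) :=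
        sorted_getElem_mono hs (by omega) (by rw [List.length_drop] at hi; omega)
  have hfself : (↑(l.drop (k-1)) : Multiset ℝ).filter (a < ·) = ↑(l.drop (k-1)) :=
    Multiset.filter_eq_self.mpr hall
  have hle : (↑(l.drop (k-1)) : Multiset ℝ) ≤ S := by
    have : (↑l : Multiset ℝ) = S := S.sort_eq _
    rw [← this]
    exact (l.drop_sublist (k-1)).subperm
  have hcard : S.card - k + 1 ≤ Multiset.card (S.filter (a < ·)) := by
    have h1 : (↑(l.drop (k-1)) : Multiset ℝ).filter (a < ·) ≤ S.filter (a < ·) :=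
      Multiset.filter_le_filter _ hle
    have h2 := Multiset.card_le_card h1
    rw [hfself] at h2
    simp only [Multiset.coe_card, List.length_drop] at h2
    omega
  omega

theorem stmt3 (f n m : ℕ) (P U : Multiset ℝ)
    (hn : n > 3 * f) (hm : m ≥ n - f)
    (hP : Multiset.card P = n) (hU : U ≤ P) (hUm : Multiset.card U = m) :
    ∀ x ∈ U,
      mmin U ≤ (min x (nth P (f + 1)) + max x (nth P (n - f))) / 2 ∧
      (min x (nth P (f + 1)) + max x (nth P (n - f))) / 2 ≤ mmax U := by
  intro x hx
  have hxa : mmin U ≤ x := mmin_le_of_mem_s3 hx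
  have hxb : x ≤ mmax U := le_mmax_of_mem_s3 hx
  have hUP : U.card ≤ P.card := Multiset.card_le_card hU
  have hPU : U + (P - U) = P := by rw [add_comm]; exact tsub_add_cancel_of_le hU
  have hdf : (P - U).card ≤ f := by rw [Multiset.card_sub hU]; omega
  -- lower bound for nth P (f+1)
  have hfa : U.filter (· < mmin U) = 0 :=
    Multiset.filter_eq_nil.mpr (fun y hy => not_lt.mpr (mmin_le_of_mem_s3 hy))
  have hPfa : Multiset.card (P.filter (· < mmin U)) ≤ f := by
    calc Multiset.card (P.filter (· < mmin U))
        = Multiset.card ((U + (P - U)).filter (· < mmin U)) := by rw [hPU]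
      _ = Multiset.card (U.filter (· < mmin U)) + Multiset.card ((P-U).filter (· < mmin U)) := by
          rw [Multiset.filter_add, Multiset.card_add]
      _ ≤ f := by
          rw [hfa]
          simp only [Multiset.card_zero, zero_add]
          exact le_trans (Multiset.card_le_card (Multiset.filter_le _ _)) hdf
  have h1 : mmin U ≤ nth P (f + 1) :=
    le_nth P (f+1) (mmin U) (by omega) (by omega) (by omega)
  -- upper bound for nth P (n-f)
  have hfb : U.filter (mmax U < ·) = 0 :=
    Multiset.filter_eq_nil.mpr (fun y hy => not_lt.mpr (le_mmax_of_mem_s3 hy))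
  have hPfb : Multiset.card (P.filter (mmax U < ·)) ≤ f := by
    calc Multiset.card (P.filter (mmax U < ·))
        = Multiset.card ((U + (P - U)).filter (mmax U < ·)) := by rw [hPU]
      _ = Multiset.card (U.filter (mmax U < ·)) + Multiset.card ((P-U).filter (mmax U < ·)) := by
          rw [Multiset.filter_add, Multiset.card_add]
      _ ≤ f := by
          rw [hfb]
          simp only [Multiset.card_zero, zero_add]
          exact le_trans (Multiset.card_le_card (Multiset.filter_le _ _)) hdf
  have h2 : nth P (n - f) ≤ mmax U :=
    nth_le P (n-f) (mmax U) (by omega) (by omega) (by omega)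
  constructor
  · have hmin : mmin U ≤ min x (nth P (f + 1)) := le_min hxa h1
    have hmax : x ≤ max x (nth P (n - f)) := le_max_left _ _
    linarith
  · have hmin : min x (nth P (f + 1)) ≤ x := min_le_left _ _
    have hmax : max x (nth P (n - f)) ≤ mmax U := max_le hxb h2
    linarith
end

section
/- Let f, n, m be natural numbers with n > 3f and m ≥ n − f. Let P be a multiset of real numbers with card P = n and let U be a sub-multiset of P with card U = m. Then for every x ∈ U, the distance between the robot's position and its computed destination satisfies |x − D(x, P)| ≤ (max U − min U)/2, where D(x, P) = (min(x, P_(f+1)) + max(x, P_(n−f)))/2. (A robot never computes a destination farther from its current position than half the diameter of the correct positions.) -/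
/-!
At most `n - m ≤ f` elements of `P` are not correct positions, so fewer than `f + 1` elements
of `P` lie strictly below `min U`, whence `min U ≤ P_(f+1)`; symmetrically `P_(n-f) ≤ max U`.
The two ends `min x P_(f+1)` and `max x P_(n-f)` of the trimmed range therefore lie in
`range(U)` and on either side of `x`, so their midpoint is within `diam(U) / 2` of `x`.
-/

theorem Multiset.countP_le_card_sub_of_le {α : Type*} [DecidableEq α] {p : α → Prop}
    [DecidablePred p] {U P : Multiset α} (hUP : U ≤ P) (h : ∀ y ∈ U, ¬ p y) :
    P.countP p ≤ Multiset.card (P - U) := by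
  conv_lhs => rw [← add_tsub_cancel_of_le hUP]
  rw [Multiset.countP_add, Multiset.countP_eq_zero.2 h, zero_add]
  exact Multiset.countP_le_card _ _

theorem abs_sub_midpoint_le {α : Type*} [Field α] [LinearOrder α] [IsStrictOrderedRing α]
    {lo a x b hi : α} (hlo : lo ≤ a) (ha : a ≤ x) (hb : x ≤ b) (hhi : b ≤ hi) :
    |x - (a + b) / 2| ≤ (hi - lo) / 2 := by
  rw [abs_le]
  constructor <;> linarith

section Order

variable {S : Multiset ℝ} {k : ℕ} {a : ℝ}

theorem nth_eq_getElem (hk : k - 1 < Multiset.card S) :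
    nth S k = (S.sort (· ≤ ·))[k - 1]'(by rwa [Multiset.length_sort]) :=
  List.getD_eq_getElem _ _ _

theorem sort_getElem_le_getElem {i j : ℕ} (hij : i ≤ j) (hj : j < (S.sort (· ≤ ·)).length) :
    (S.sort (· ≤ ·))[i] ≤ (S.sort (· ≤ ·))[j] :=
  (S.pairwise_sort (· ≤ ·)).sortedLE.getElem_le_getElem_of_le hij

theorem mmin_le_of_mem_s4 (hx : a ∈ S) : mmin S ≤ a := by
  obtain ⟨i, hi, rfl⟩ := List.getElem_of_mem ((S.mem_sort (· ≤ ·)).2 hx)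
  rw [Multiset.length_sort] at hi
  rw [mmin, nth_eq_getElem (by omega)]
  exact sort_getElem_le_getElem (Nat.zero_le i) _

theorem le_mmax_of_mem_s4 (hx : a ∈ S) : a ≤ mmax S := by
  obtain ⟨i, hi, rfl⟩ := List.getElem_of_mem ((S.mem_sort (· ≤ ·)).2 hx)
  rw [Multiset.length_sort] at hi
  rw [mmax, nth_eq_getElem (by omega)]
  exact sort_getElem_le_getElem (by omega) _

theorem le_nth_of_countP_lt (hk : k ≤ Multiset.card S) (h : S.countP (· < a) < k) :
    a ≤ nth S k := by
  by_contra! hlt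
  set l := S.sort (· ≤ ·)
  have hlen : l.length = Multiset.card S := Multiset.length_sort _
  rw [nth_eq_getElem (by omega)] at hlt
  have hsub : (l.take k : Multiset ℝ) ≤ S := by
    conv_rhs => rw [← Multiset.sort_eq S (· ≤ ·)]
    exact Multiset.coe_le.2 (List.take_sublist _ _).subperm
  have hbelow : ∀ y ∈ (l.take k : Multiset ℝ), y < a := by
    intro y hy
    obtain ⟨i, hi, rfl⟩ := List.mem_take_iff_getElem.1 (Multiset.mem_coe.1 hy)
    exact (sort_getElem_le_getElem (by omega) _).trans_lt hlt
  have := Multiset.countP_le_of_le (· < a) hsub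
  rw [Multiset.countP_eq_card.2 hbelow, Multiset.coe_card, List.length_take] at this
  omega

theorem nth_le_of_countP_add_le (hk : 1 ≤ k) (h : S.countP (a < ·) + k ≤ Multiset.card S) :
    nth S k ≤ a := by
  by_contra! hlt
  set l := S.sort (· ≤ ·)
  have hlen : l.length = Multiset.card S := Multiset.length_sort _
  rw [nth_eq_getElem (by omega)] at hlt
  have hsub : (l.drop (k - 1) : Multiset ℝ) ≤ S := by
    conv_rhs => rw [← Multiset.sort_eq S (· ≤ ·)]
    exact Multiset.coe_le.2 (List.drop_sublist _ _).subperm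
  have habove : ∀ y ∈ (l.drop (k - 1) : Multiset ℝ), a < y := by
    intro y hy
    obtain ⟨i, hi, rfl⟩ := List.mem_drop_iff_getElem.1 (Multiset.mem_coe.1 hy)
    exact hlt.trans_le (sort_getElem_le_getElem (by omega) _)
  have := Multiset.countP_le_of_le (a < ·) hsub
  rw [Multiset.countP_eq_card.2 habove, Multiset.coe_card, List.length_drop] at this
  omega

end Order

theorem mmin_le_nth {U P : Multiset ℝ} {k : ℕ} (hUP : U ≤ P) (hk : k ≤ Multiset.card P)
    (h : Multiset.card (P - U) < k) : mmin U ≤ nth P k :=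
  le_nth_of_countP_lt hk <|
    (Multiset.countP_le_card_sub_of_le hUP fun _ hy => not_lt.2 (mmin_le_of_mem_s4 hy)).trans_lt h

theorem nth_le_mmax {U P : Multiset ℝ} {k : ℕ} (hUP : U ≤ P) (hk : 1 ≤ k)
    (h : Multiset.card (P - U) + k ≤ Multiset.card P) : nth P k ≤ mmax U :=
  nth_le_of_countP_add_le hk <| le_trans (Nat.add_le_add_right
    (Multiset.countP_le_card_sub_of_le hUP fun _ hy => not_lt.2 (le_mmax_of_mem_s4 hy)) k) h

theorem stmt4 (f n m : ℕ) (P U : Multiset ℝ)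
    (hn : n > 3 * f) (hm : m ≥ n - f)
    (hP : Multiset.card P = n) (hU : U ≤ P) (hUm : Multiset.card U = m) :
    ∀ x ∈ U,
      |x - (min x (nth P (f + 1)) + max x (nth P (n - f))) / 2| ≤
        (mmax U - mmin U) / 2 := by
  intro x hx
  have hcard : Multiset.card (P - U) = n - m := by rw [Multiset.card_sub hU, hP, hUm]
  have hpos : 0 < n := hP ▸ Multiset.card_pos_iff_exists_mem.2 ⟨x, Multiset.mem_of_le hU hx⟩
  have hlo : mmin U ≤ nth P (f + 1) := mmin_le_nth hU (by omega) (by omega)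
  have hhi : nth P (n - f) ≤ mmax U := nth_le_mmax hU (by omega) (by omega)
  exact abs_sub_midpoint_le (le_min (mmin_le_of_mem_s4 hx) hlo) (min_le_left _ _)
    (le_max_left _ _) (max_le (le_mmax_of_mem_s4 hx) hhi)
end

section
/- Let P and U be multisets of real numbers with U a sub-multiset of P, card P = n and card U = m (so m ≤ n). Then for every k with 1 ≤ k ≤ m, the order statistics satisfy P_(k) ≤ U_(k) ≤ P_(k + (n − m)). In particular, removing at most f elements from a multiset can shift each order statistic by at most f index positions. -/
/-! Sorting turns `U ≤ P` into a sublist relation between the sorted lists, i.e. an order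
embedding `f : Fin m ↪o Fin n` of positions with `U_(i+1) = P_(f i + 1)`. A strictly monotone map
`Fin m → Fin n` satisfies `i ≤ f i ≤ i + (n - m)`, and monotonicity of the sorted list `P` turns
these index bounds into the two inequalities. -/

namespace Fin

theorem val_le_orderEmbedding {m n : ℕ} (f : Fin m ↪o Fin n) (i : Fin m) : (i : ℕ) ≤ f i := by
  obtain ⟨i, hi⟩ := i
  induction i with
  | zero => exact Nat.zero_le _
  | succ i ih =>
    have hstep : f ⟨i, by omega⟩ < f ⟨i + 1, hi⟩ := f.lt_iff_lt.2 (Fin.mk_lt_mk.2 i.lt_succ_self)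
    exact (ih (by omega)).trans_lt hstep

theorem orderEmbedding_val_le {m n : ℕ} (f : Fin m ↪o Fin n) (i : Fin m) :
    (f i : ℕ) ≤ i + (n - m) := by
  -- the lower bound applied to `rev ∘ f ∘ rev`
  let g : Fin m ↪o Fin n :=
    (revOrderIso.symm.toOrderEmbedding.trans f.dual).trans revOrderIso.toOrderEmbedding
  have hg := val_le_orderEmbedding g i.rev
  have hgi : g i.rev = (f i).rev := by
    simp only [RelEmbedding.coe_trans, OrderIso.coe_toOrderEmbedding, Function.comp_apply,
      revOrderIso_symm_apply, rev_rev, revOrderIso_apply, rev_inj, g]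
    rfl
  rw [hgi, val_rev, val_rev] at hg
  have := (f i).isLt
  omega

end Fin

namespace List

variable {α : Type*} [Preorder α] {l L : List α}

theorem Sublist.getElem_le_getElem_of_pairwise (h : l <+ L) (hL : L.Pairwise (· ≤ ·))
    (i : ℕ) (hi : i < l.length) : L[i]'(hi.trans_le h.length_le) ≤ l[i] := by
  obtain ⟨f, hf⟩ := sublist_iff_exists_fin_orderEmbedding_get_eq.mp h
  have hfi := hf ⟨i, hi⟩
  simp only [get_eq_getElem] at hfi
  rw [hfi]
  exact hL.rel_get_of_le (a := ⟨i, _⟩) (Fin.val_le_orderEmbedding f ⟨i, hi⟩)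

theorem Sublist.getElem_le_getElem_add_of_pairwise (h : l <+ L) (hL : L.Pairwise (· ≤ ·))
    (i : ℕ) (hi : i < l.length) :
    l[i] ≤ L[i + (L.length - l.length)]'(by have := h.length_le; omega) := by
  obtain ⟨f, hf⟩ := sublist_iff_exists_fin_orderEmbedding_get_eq.mp h
  have hfi := hf ⟨i, hi⟩
  simp only [get_eq_getElem] at hfi
  rw [hfi]
  exact hL.rel_get_of_le (b := ⟨_, _⟩) (Fin.orderEmbedding_val_le f ⟨i, hi⟩)

end List

theorem nth_eq_getElem_sort_s11 {S : Multiset ℝ} {k i : ℕ} (hki : k = i + 1)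
    (hi : i < (S.sort (· ≤ ·)).length) : nth S k = (S.sort (· ≤ ·))[i] := by
  subst hki
  exact List.getD_eq_getElem _ _ hi

section

variable {U P : Multiset ℝ} (hU : U ≤ P) {k : ℕ} (hk : 1 ≤ k) (hkU : k ≤ Multiset.card U)
include hU hk hkU

theorem nth_le_nth_of_le_s11 : nth P k ≤ nth U k := by
  have hsub := Multiset.sort_sublist_sort_of_le (· ≤ ·) hU
  have hkU' : k - 1 < (U.sort (· ≤ ·)).length := by rw [Multiset.length_sort]; omega
  rw [nth_eq_getElem_sort_s11 (by omega) hkU', nth_eq_getElem_sort_s11 (i := k - 1) (by omega)]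
  exact hsub.getElem_le_getElem_of_pairwise (Multiset.pairwise_sort _ _) _ hkU'

theorem nth_le_nth_add_card_sub_of_le :
    nth U k ≤ nth P (k + (Multiset.card P - Multiset.card U)) := by
  have hsub := Multiset.sort_sublist_sort_of_le (· ≤ ·) hU
  have hkU' : k - 1 < (U.sort (· ≤ ·)).length := by rw [Multiset.length_sort]; omega
  rw [nth_eq_getElem_sort_s11 (by omega) hkU',
    nth_eq_getElem_sort_s11 (i := k - 1 + ((P.sort (· ≤ ·)).length - (U.sort (· ≤ ·)).length))
      (by simp only [Multiset.length_sort]; omega)]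
  exact hsub.getElem_le_getElem_add_of_pairwise (Multiset.pairwise_sort _ _) _ hkU'

end

theorem stmt11 (n m : ℕ) (P U : Multiset ℝ)
    (hU : U ≤ P) (hP : Multiset.card P = n) (hUm : Multiset.card U = m) :
    ∀ k : ℕ, 1 ≤ k → k ≤ m → nth P k ≤ nth U k ∧ nth U k ≤ nth P (k + (n - m)) := by
  subst hP hUm
  exact fun k hk hkU => ⟨nth_le_nth_of_le_s11 hU hk hkU, nth_le_nth_add_card_sub_of_le hU hk hkU⟩
end

section
/- Let U : ℕ → Multiset ℝ be a sequence of nonempty multisets of real numbers (the positions of the correct robots over time) such that: (cautiousness) the ranges are nested, i.e. for all t, [min U(t+1), max U(t+1)] ⊆ [min U(t), max U(t)]; and (shrinking) there exists α with 0 < α < 1 such that for all t there exists t′ > t with diam(U(t′)) ≤ α · diam(U(t)). Then the correct robots converge: diam(U(t)) tends to 0 as t → ∞, and there exists a point p ∈ ℝ such that for every ε > 0 there is a time T with [min U(t), max U(t)] ⊆ [p − ε, p + ε] for all t ≥ T. -/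
open Filter Set Topology

theorem mmin_le_mmax (S : Multiset ℝ) : mmin S ≤ mmax S := by
  rcases eq_or_ne S 0 with rfl | hS
  · -- both sides are the default value `0` of `List.getD`
    simp [mmin, mmax, nth]
  have hlen : (S.sort (· ≤ ·)).length = S.card := S.length_sort _
  have hpos : 0 < S.card := Multiset.card_pos.mpr hS
  unfold mmin mmax nth
  rw [List.getD_eq_getElem _ _ (by omega), List.getD_eq_getElem _ _ (by omega)]
  exact (S.pairwise_sort _).rel_get_of_le (by simp only [Fin.mk_le_mk]; omega)

theorem antitone_sub_of_antitone_Icc {β α : Type*} [Preorder β] [AddCommGroup α] [PartialOrder α]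
    [IsOrderedAddMonoid α] {f g : β → α} (h : Antitone fun n => Icc (f n) (g n))
    (h' : ∀ n, f n ≤ g n) : Antitone (g - f) := fun _ n hmn =>
  have hsub := (Icc_subset_Icc_iff (h' n)).1 (h hmn)
  sub_le_sub hsub.2 hsub.1

theorem Antitone.tendsto_zero_of_forall_exists_le_mul {d : ℕ → ℝ} (hd : Antitone d)
    (hd0 : ∀ t, 0 ≤ d t) {α : ℝ} (hα : α < 1) (hshrink : ∀ t, ∃ t', d t' ≤ α * d t) :
    Tendsto d atTop (𝓝 0) := by
  have hbdd : BddBelow (range d) := ⟨0, forall_mem_range.2 hd0⟩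
  have hlim := tendsto_atTop_ciInf hd hbdd
  set L := ⨅ t, d t
  have hL0 : 0 ≤ L := le_ciInf hd0
  have hLα : L ≤ α * L :=
    ge_of_tendsto' (hlim.const_mul α) fun t =>
      let ⟨t', ht'⟩ := hshrink t; (ciInf_le hbdd t').trans ht'
  have hL : L = 0 := by nlinarith
  rwa [hL] at hlim

theorem Icc_subset_Icc_sub_add_of_mem {a b p ε : ℝ} (hp : p ∈ Icc a b) (hε : b - a ≤ ε) :
    Icc a b ⊆ Icc (p - ε) (p + ε) :=
  Icc_subset_Icc (by linarith [hp.2]) (by linarith [hp.1])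

theorem stmt12_general (U : ℕ → Multiset ℝ)
    (hcaut : ∀ t, Set.Icc (mmin (U (t + 1))) (mmax (U (t + 1))) ⊆
      Set.Icc (mmin (U t)) (mmax (U t)))
    (hshrink : ∃ α : ℝ, 0 < α ∧ α < 1 ∧
      ∀ t, ∃ t', t' > t ∧ mdiam (U t') ≤ α * mdiam (U t)) :
    Filter.Tendsto (fun t => mdiam (U t)) Filter.atTop (nhds 0) ∧
    ∃ p : ℝ, ∀ ε : ℝ, ε > 0 → ∃ T, ∀ t ≥ T,
      Set.Icc (mmin (U t)) (mmax (U t)) ⊆ Set.Icc (p - ε) (p + ε) := by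
  obtain ⟨α, -, hα1, hα⟩ := hshrink
  have hle : ∀ t, mmin (U t) ≤ mmax (U t) := fun t => mmin_le_mmax (U t)
  have hnested : Antitone fun t => Icc (mmin (U t)) (mmax (U t)) := antitone_nat_of_succ_le hcaut
  have hdiam : Tendsto (fun t => mdiam (U t)) atTop (𝓝 0) :=
    Antitone.tendsto_zero_of_forall_exists_le_mul (antitone_sub_of_antitone_Icc hnested hle)
      (fun t => sub_nonneg.2 (hle t)) hα1 fun t => (hα t).imp fun _ => And.right
  refine ⟨hdiam, ⨆ t, mmin (U t), fun ε hε => ?_⟩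
  have hp := mem_iInter.1 (ciSup_mem_iInter_Icc_of_antitone_Icc hnested hle)
  obtain ⟨T, hT⟩ := (hdiam.eventually_lt_const hε).exists_forall_of_atTop
  exact ⟨T, fun t ht => Icc_subset_Icc_sub_add_of_mem (hp t) (hT t ht).le⟩

theorem stmt12 (U : ℕ → Multiset ℝ) (hne : ∀ t, U t ≠ 0)
    (hcaut : ∀ t, Set.Icc (mmin (U (t + 1))) (mmax (U (t + 1))) ⊆
      Set.Icc (mmin (U t)) (mmax (U t)))
    (hshrink : ∃ α : ℝ, 0 < α ∧ α < 1 ∧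
      ∀ t, ∃ t', t' > t ∧ mdiam (U t') ≤ α * mdiam (U t)) :
    Filter.Tendsto (fun t => mdiam (U t)) Filter.atTop (nhds 0) ∧
    ∃ p : ℝ, ∀ ε : ℝ, ε > 0 → ∃ T, ∀ t ≥ T,
      Set.Icc (mmin (U t)) (mmax (U t)) ⊆ Set.Icc (p - ε) (p + ε) :=
  stmt12_general U hcaut hshrink
end
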